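/- (Theorem 1, almost-sure consistency of the doubly-robust estimator with correctly specified nuisance functions.) Let (Y₀ᵢ, Y₁ᵢ, Gᵢ, Xᵢ)_{i≥1} be an i.i.d. sequence with the same distribution as (Y₀, Y₁, G, X), set ΔYᵢ := Y₁ᵢ − Y₀ᵢ, and let Δμ_N, Δμ_C be versions of E[ΔY ∣ G=N, X] and E[ΔY ∣ G=C, X]. Define φ(y₀, y₁, g, x) := (e_T(x)/p_T)·(1{g=N}/e_N(x))·(y₁ − y₀ − Δμ_N(x)) + (1{g=T}/p_T)·Δμ_N(x) − [ (e_T(x)/p_T)·(1{g=C}/e_C(x))·(y₁ − y₀ − Δμ_C(x)) + (1{g=T}/p_T)·Δμ_C(x) ]. Under consistency of the potential outcomes and Assumptions (A5) and (A6), (1/n)·Σ_{i=1}^{n} φ(Y₀ᵢ, Y₁ᵢ, Gᵢ, Xᵢ) converges almost surely, as n → ∞, to δ := E[(Y₁^{(1,1)} − Y₁^{(1,0)})·1{G=T}]/p_T. -/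

import Mathlib

open MeasureTheory ProbabilityTheory Filter Topology

/-- Group label: `T` = treated (`g(A)=(1,0)`), `N` = neighboring control (`g(A)=(0,1)`),
`C` = non-neighboring control (`g(A)=(0,0)`). -/
inductive GLabel : Type
  | T | N | C
  deriving DecidableEq

instance : MeasurableSpace GLabel := ⊤

/-- The σ-algebra `𝔛` generated by the covariates `X`. -/
def sigmaX {Ω : Type} {q : ℕ} (X : Ω → (Fin q → ℝ)) : MeasurableSpace Ω :=
  MeasurableSpace.comap X inferInstance

/-- The indicator `1{G = g}` as a real-valued function. -/
def indG {Ω : Type} (G : Ω → GLabel) (g : GLabel) (ω : Ω) : ℝ :=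
  if G ω = g then 1 else 0

/-- `f` is a version of the conditional expectation `E[Z ∣ G = g, X]`:
it is measurable and `E[Z·1{G=g} ∣ 𝔛] = f(X)·e_g(X)` `P`-a.s. -/
def IsCondVersion {Ω : Type} [MeasurableSpace Ω] (P : Measure Ω) {q : ℕ}
    (X : Ω → (Fin q → ℝ)) (G : Ω → GLabel) (e : GLabel → (Fin q → ℝ) → ℝ)
    (g : GLabel) (Z : Ω → ℝ) (f : (Fin q → ℝ) → ℝ) : Prop :=
  Measurable f ∧
    P[(fun ω => Z ω * indG G g ω) | sigmaX X] =ᵐ[P] (fun ω => f (X ω) * e g (X ω))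

/-! The summands `φ(Vᵢ)` are i.i.d. and integrable, because the inverse-propensity weights
`e_T / e_g` are bounded by `1/ε`, so by the strong law their average converges to `E φ`.
Each half of `φ` is an augmented IPW score whose residual term `1{G=g}(ΔY - Δμ_g(X))` has
conditional mean zero given `X`, so its mean is `E[1{G=T} Δμ_g(X)] / p_T`. By consistency,
`Δμ_N = E[Y₁^{(0,1)} - Y₁^{(0,0)} | N, X] + E[Y₁^{(0,0)} - Y₀^{(0,0)} | N, X]` and
`Δμ_C = E[Y₁^{(0,0)} - Y₀^{(0,0)} | C, X]`; parallel trends (A6) cancels the trend terms and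
(A5) turns `Δμ_N - Δμ_C` into `-E[Y₁^{(1,0)} - Y₁^{(1,1)} | T, X]`, whose mean over the treated
is `δ`. -/

theorem strong_law_ae_comp {Ω α : Type*} [MeasurableSpace Ω] [MeasurableSpace α]
    {P : Measure Ω} {V : ℕ → Ω → α} {W : Ω → α} {φ : α → ℝ} (hφ : Measurable φ)
    (hV : iIndepFun V P) (hVW : ∀ i, IdentDistrib (V i) W P P) (hint : Integrable (φ ∘ W) P) :
    ∀ᵐ ω ∂P, Tendsto (fun n : ℕ => (n : ℝ)⁻¹ * ∑ i ∈ Finset.range n, φ (V i ω)) atTop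
      (𝓝 (∫ ω, φ (W ω) ∂P)) := by
  have hident : ∀ i, IdentDistrib (φ ∘ V i) (φ ∘ W) P P := fun i => (hVW i).comp hφ
  have hSLLN := strong_law_ae_real (fun i => φ ∘ V i) ((hident 0).integrable_iff.mpr hint)
    (fun i j hij => (hV.comp (fun _ => φ) fun _ => hφ).indepFun hij)
    (fun i => (hident i).trans (hident 0).symm)
  rw [(hident 0).integral_eq] at hSLLN
  filter_upwards [hSLLN] with ω hω
  simpa only [div_eq_inv_mul, Function.comp_apply] using hω

lemma abs_indG_le {Ω : Type} (G : Ω → GLabel) (g : GLabel) (ω : Ω) : |indG G g ω| ≤ 1 := by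
  unfold indG; split_ifs <;> norm_num

lemma stronglyMeasurable_sigmaX_comp {Ω : Type} {q : ℕ} {X : Ω → (Fin q → ℝ)}
    {f : (Fin q → ℝ) → ℝ} (hf : Measurable f) :
    StronglyMeasurable[sigmaX X] (fun ω => f (X ω)) :=
  (hf.comp (comap_measurable X)).stronglyMeasurable

lemma sigmaX_le {Ω : Type} [MeasurableSpace Ω] {q : ℕ} {X : Ω → (Fin q → ℝ)}
    (hX : Measurable X) : sigmaX X ≤ ‹MeasurableSpace Ω› :=
  hX.comap_le

section CondVersion

variable {Ω : Type} [MeasurableSpace Ω] {P : Measure Ω} {q : ℕ} {X : Ω → (Fin q → ℝ)}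
  {G : Ω → GLabel} {e : GLabel → (Fin q → ℝ) → ℝ} {g : GLabel} {Z Z' : Ω → ℝ}
  {f f' w μ : (Fin q → ℝ) → ℝ} {Y0 Y1 : Ω → ℝ} {ε pT : ℝ}

lemma measurable_indG (hG : Measurable G) (g : GLabel) : Measurable (indG G g) :=
  Measurable.ite (hG (MeasurableSpace.measurableSet_top (s := {g}))) measurable_const
    measurable_const

lemma MeasureTheory.Integrable.mul_indG (hZ : Integrable Z P) (hG : Measurable G) (g : GLabel) :
    Integrable (fun ω => Z ω * indG G g ω) P :=
  hZ.mul_bdd (measurable_indG hG g).aestronglyMeasurable (ae_of_all _ (abs_indG_le G g))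

lemma integrable_indG [IsFiniteMeasure P] (hG : Measurable G) (g : GLabel) :
    Integrable (indG G g) P :=
  (integrable_const (1 : ℝ)).mono' (measurable_indG hG g).aestronglyMeasurable
    (ae_of_all _ (abs_indG_le G g))

lemma isCondVersion_comp [IsFiniteMeasure P] (hG : Measurable G)
    (hprop : P[(fun ω => indG G g ω) | sigmaX X] =ᵐ[P] (fun ω => e g (X ω)))
    (hf : Measurable f) (hfX : Integrable (fun ω => f (X ω)) P) :
    IsCondVersion P X G e g (fun ω => f (X ω)) f := by
  refine ⟨hf, ?_⟩
  filter_upwards [condExp_mul_of_stronglyMeasurable_left (stronglyMeasurable_sigmaX_comp hf)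
    (hfX.mul_indG hG g) (integrable_indG hG g), hprop] with ω h1 h2
  exact h1.trans (congrArg _ h2)

namespace IsCondVersion

lemma integrable_comp (h : IsCondVersion P X G e g Z f) (hX : Measurable X)
    (hε : 0 < ε) (hpos : ∀ x, ε ≤ e g x) : Integrable (fun ω => f (X ω)) P := by
  have hfe : Integrable (fun ω => f (X ω) * e g (X ω)) P := integrable_condExp.congr h.2
  refine (hfe.norm.const_mul ε⁻¹).mono' (h.1.comp hX).aestronglyMeasurable
    (ae_of_all _ fun ω => ?_)
  have hε_le : ε ≤ ‖e g (X ω)‖ := (hpos _).trans (le_abs_self _)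
  calc ‖f (X ω)‖ = ε⁻¹ * (‖f (X ω)‖ * ε) := by field_simp
    _ ≤ ε⁻¹ * ‖f (X ω) * e g (X ω)‖ := by rw [norm_mul]; gcongr

lemma ae_eq_comp (h : IsCondVersion P X G e g Z f) (h' : IsCondVersion P X G e g Z' f')
    (hZ : ∀ᵐ ω ∂P, G ω = g → Z ω = Z' ω) (he : ∀ x, e g x ≠ 0) :
    (fun ω => f (X ω)) =ᵐ[P] fun ω => f' (X ω) := by
  have hZ_ind : (fun ω => Z ω * indG G g ω) =ᵐ[P] fun ω => Z' ω * indG G g ω := by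
    filter_upwards [hZ] with ω hω
    unfold indG
    split_ifs with hg
    · rw [hω hg]
    · rw [mul_zero, mul_zero]
  filter_upwards [h.2.symm.trans ((condExp_congr_ae hZ_ind).trans h'.2)] with ω hω
  exact mul_right_cancel₀ (he _) hω

lemma add (h : IsCondVersion P X G e g Z f) (h' : IsCondVersion P X G e g Z' f')
    (hG : Measurable G) (hZ : Integrable Z P) (hZ' : Integrable Z' P) :
    IsCondVersion P X G e g (fun ω => Z ω + Z' ω) (fun x => f x + f' x) := by
  refine ⟨h.1.add h'.1, ?_⟩
  have hsum := condExp_add (hZ.mul_indG hG g) (hZ'.mul_indG hG g) (sigmaX X)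
  refine (condExp_congr_ae (ae_of_all _ fun ω => add_mul _ _ _)).trans (hsum.trans ?_)
  filter_upwards [h.2, h'.2] with ω h1 h2
  simp only [Pi.add_apply, h1, h2]
  ring

lemma comp_mul (h : IsCondVersion P X G e g Z f) (hw : Measurable w)
    (hZ : Integrable (fun ω => Z ω * indG G g ω) P)
    (hwZ : Integrable (fun ω => w (X ω) * Z ω * indG G g ω) P) :
    IsCondVersion P X G e g (fun ω => w (X ω) * Z ω) (fun x => w x * f x) := by
  refine ⟨hw.mul h.1, ?_⟩
  refine (condExp_congr_ae (ae_of_all _ fun ω => mul_assoc _ _ _)).trans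
    ((condExp_mul_of_stronglyMeasurable_left (stronglyMeasurable_sigmaX_comp hw)
      (hwZ.congr (ae_of_all _ fun ω => mul_assoc _ _ _)) hZ).trans ?_)
  filter_upwards [h.2] with ω hω
  simp only [Pi.mul_apply, hω]
  ring

lemma integral_mul_indG [IsFiniteMeasure P] (h : IsCondVersion P X G e g Z f)
    (hX : Measurable X) :
    ∫ ω, Z ω * indG G g ω ∂P = ∫ ω, f (X ω) * e g (X ω) ∂P := by
  rw [← integral_condExp (sigmaX_le hX)]
  exact integral_congr_ae h.2

lemma integral_comp_mul_indG [IsFiniteMeasure P] (h : IsCondVersion P X G e g Z f)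
    (hX : Measurable X) (hG : Measurable G)
    (hprop : P[(fun ω => indG G g ω) | sigmaX X] =ᵐ[P] (fun ω => e g (X ω)))
    (hfX : Integrable (fun ω => f (X ω)) P) :
    ∫ ω, f (X ω) * indG G g ω ∂P = ∫ ω, Z ω * indG G g ω ∂P :=
  ((isCondVersion_comp hG hprop h.1 hfX).integral_mul_indG hX).trans (h.integral_mul_indG hX).symm

end IsCondVersion

lemma ae_sub_eq_neg_of_parallel_trends (hG : Measurable G) (he : ∀ g x, e g x ≠ 0)
    {Y101 Y100 Y000 : Ω → ℝ} (hI01 : Integrable Y101 P) (hI00 : Integrable Y100 P)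
    (hI000 : Integrable Y000 P)
    (hconsN : ∀ᵐ ω ∂P, G ω = GLabel.N → Y1 ω = Y101 ω)
    (hconsC : ∀ᵐ ω ∂P, G ω = GLabel.C → Y1 ω = Y100 ω) (hcons0 : Y0 =ᵐ[P] Y000)
    {fT fN gN gC ΔμN ΔμC : (Fin q → ℝ) → ℝ}
    (hfN : IsCondVersion P X G e GLabel.N (fun ω => Y101 ω - Y100 ω) fN)
    (hgN : IsCondVersion P X G e GLabel.N (fun ω => Y100 ω - Y000 ω) gN)
    (hgC : IsCondVersion P X G e GLabel.C (fun ω => Y100 ω - Y000 ω) gC)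
    (hΔμN : IsCondVersion P X G e GLabel.N (fun ω => Y1 ω - Y0 ω) ΔμN)
    (hΔμC : IsCondVersion P X G e GLabel.C (fun ω => Y1 ω - Y0 ω) ΔμC)
    (hA5 : ∀ᵐ ω ∂P, fT (X ω) + fN (X ω) = 0) (hA6 : ∀ᵐ ω ∂P, gN (X ω) = gC (X ω)) :
    (fun ω => ΔμN (X ω) - ΔμC (X ω)) =ᵐ[P] fun ω => -fT (X ω) := by
  have hN := hΔμN.ae_eq_comp (hfN.add hgN hG (hI01.sub hI00) (hI00.sub hI000))
    (by filter_upwards [hconsN, hcons0] with ω h1 h0 hg; rw [h1 hg, h0]; ring) (he .N)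
  have hC := hΔμC.ae_eq_comp hgC
    (by filter_upwards [hconsC, hcons0] with ω h1 h0 hg; rw [h1 hg, h0]) (he .C)
  filter_upwards [hN, hC, hA5, hA6] with ω hN hC hA5 hA6
  rw [hN, hC, ← hA6]
  linear_combination hA5

/-- The paper's `φ` is `aipw e p_T N Δμ_N - aipw e p_T C Δμ_C`. -/
noncomputable def aipw (e : GLabel → (Fin q → ℝ) → ℝ) (pT : ℝ) (g : GLabel)
    (μ : (Fin q → ℝ) → ℝ) (v : ℝ × ℝ × GLabel × (Fin q → ℝ)) : ℝ :=
  e .T v.2.2.2 / pT * ((if v.2.2.1 = g then 1 else 0) / e g v.2.2.2) * (v.2.1 - v.1 - μ v.2.2.2)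
    + (if v.2.2.1 = .T then 1 else 0) / pT * μ v.2.2.2

omit [MeasurableSpace Ω] in
lemma aipw_apply (ω : Ω) :
    aipw e pT g μ (Y0 ω, Y1 ω, G ω, X ω) =
      (e .T (X ω) / e g (X ω) * (Y1 ω - Y0 ω) * indG G g ω
        - e .T (X ω) / e g (X ω) * μ (X ω) * indG G g ω + μ (X ω) * indG G .T ω) / pT := by
  unfold aipw indG
  ring

lemma measurable_aipw (he : ∀ g, Measurable (e g)) (hμ : Measurable μ) :
    Measurable (aipw e pT g μ) := by
  have hind : ∀ g', Measurable fun v : ℝ × ℝ × GLabel × (Fin q → ℝ) =>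
      if v.2.2.1 = g' then (1 : ℝ) else 0 := fun g' =>
    (measurable_from_top (f := fun g : GLabel => if g = g' then (1 : ℝ) else 0)).comp
      measurable_snd.snd.fst
  have heT := he .T
  have heg := he g
  unfold aipw
  fun_prop

lemma norm_div_propensity_le (hε : 0 < ε) (he1 : ∀ g x, e g x ≤ 1) (hpos : ∀ g x, ε ≤ e g x)
    (x : Fin q → ℝ) : ‖e .T x / e g x‖ ≤ ε⁻¹ := by
  rw [norm_div, Real.norm_of_nonneg (hε.le.trans (hpos _ _)),
    Real.norm_of_nonneg (hε.le.trans (hpos _ _)), ← one_div]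
  exact div_le_div₀ zero_le_one (he1 _ _) hε (hpos _ _)

lemma integrable_propensity_ratio_mul (hX : Measurable X) (he : ∀ g, Measurable (e g))
    (he1 : ∀ g x, e g x ≤ 1) (hε : 0 < ε) (hpos : ∀ g x, ε ≤ e g x) (hZ : Integrable Z P) :
    Integrable (fun ω => e .T (X ω) / e g (X ω) * Z ω) P :=
  hZ.bdd_mul (((he .T).div (he g)).comp hX).aestronglyMeasurable
    (ae_of_all _ fun ω => norm_div_propensity_le hε he1 hpos (X ω))

lemma integrable_aipw (hX : Measurable X) (hG : Measurable G)
    (hΔY : Integrable (fun ω => Y1 ω - Y0 ω) P) (he : ∀ g, Measurable (e g))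
    (he1 : ∀ g x, e g x ≤ 1) (hε : 0 < ε) (hpos : ∀ g x, ε ≤ e g x)
    (hμ : IsCondVersion P X G e g (fun ω => Y1 ω - Y0 ω) μ) :
    Integrable (fun ω => aipw e pT g μ (Y0 ω, Y1 ω, G ω, X ω)) P := by
  have hΔY_ind := integrable_propensity_ratio_mul (g := g) hX he he1 hε hpos
    (hΔY.mul_indG hG g)
  have hμ_ind := integrable_propensity_ratio_mul (g := g) hX he he1 hε hpos
    ((hμ.integrable_comp hX hε (hpos g)).mul_indG hG g)
  simp_rw [aipw_apply, mul_assoc _ _ (indG G g _)]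
  exact ((hΔY_ind.sub hμ_ind).add
    ((hμ.integrable_comp hX hε (hpos g)).mul_indG hG .T)).div_const pT

variable [IsFiniteMeasure P]

lemma integral_aipw (hX : Measurable X) (hG : Measurable G)
    (hΔY : Integrable (fun ω => Y1 ω - Y0 ω) P) (he : ∀ g, Measurable (e g))
    (he1 : ∀ g x, e g x ≤ 1) (hε : 0 < ε) (hpos : ∀ g x, ε ≤ e g x)
    (hprop : P[(fun ω => indG G g ω) | sigmaX X] =ᵐ[P] (fun ω => e g (X ω)))
    (hμ : IsCondVersion P X G e g (fun ω => Y1 ω - Y0 ω) μ) :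
    ∫ ω, aipw e pT g μ (Y0 ω, Y1 ω, G ω, X ω) ∂P = (∫ ω, μ (X ω) * indG G .T ω ∂P) / pT := by
  have hw : Measurable fun x => e .T x / e g x := (he .T).div (he g)
  have hμX := hμ.integrable_comp hX hε (hpos g)
  have hΔY_ind : Integrable (fun ω => e .T (X ω) / e g (X ω) * (Y1 ω - Y0 ω) * indG G g ω) P :=
    (integrable_propensity_ratio_mul (g := g) hX he he1 hε hpos (hΔY.mul_indG hG g)).congr
      (ae_of_all _ fun ω => (mul_assoc _ _ _).symm)
  have hμ_ind : Integrable (fun ω => e .T (X ω) / e g (X ω) * μ (X ω) * indG G g ω) P :=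
    (integrable_propensity_ratio_mul (g := g) hX he he1 hε hpos (hμX.mul_indG hG g)).congr
      (ae_of_all _ fun ω => (mul_assoc _ _ _).symm)
  -- both weighted terms have the same version `(e_T / e_g) μ`, so the residual term has mean zero
  have hΔY_int := (hμ.comp_mul hw (hΔY.mul_indG hG g) hΔY_ind).integral_mul_indG hX
  have hμ_int : ∫ ω, e .T (X ω) / e g (X ω) * μ (X ω) * indG G g ω ∂P
      = ∫ ω, e .T (X ω) / e g (X ω) * μ (X ω) * e g (X ω) ∂P :=
    (isCondVersion_comp (f := fun x => e .T x / e g x * μ x) hG hprop (hw.mul hμ.1)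
      (integrable_propensity_ratio_mul (g := g) hX he he1 hε hpos hμX)).integral_mul_indG hX
  have hresidual : Integrable (fun ω => e .T (X ω) / e g (X ω) * (Y1 ω - Y0 ω) * indG G g ω
      - e .T (X ω) / e g (X ω) * μ (X ω) * indG G g ω) P := hΔY_ind.sub hμ_ind
  simp_rw [aipw_apply]
  rw [integral_div, integral_add hresidual (hμX.mul_indG hG .T),
    integral_sub hΔY_ind hμ_ind, hΔY_int, hμ_int, sub_self, zero_add]

end CondVersion

theorem stmt_14_general
    {Ω : Type} [MeasurableSpace Ω] (P : Measure Ω) [IsProbabilityMeasure P]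
    {q : ℕ} (X : Ω → (Fin q → ℝ)) (hX : Measurable X)
    (G : Ω → GLabel) (hG : Measurable G)
    (Y0 Y1 : Ω → ℝ) (hY0 : Integrable Y0 P) (hY1 : Integrable Y1 P)
    (e : GLabel → (Fin q → ℝ) → ℝ) (he : ∀ g, Measurable (e g))
    (he1 : ∀ g x, e g x ≤ 1)
    (hprop : ∀ g : GLabel,
      P[(fun ω => indG G g ω) | sigmaX X] =ᵐ[P] (fun ω => e g (X ω)))
    (ε : ℝ) (hε : 0 < ε) (hpos : ∀ g x, ε ≤ e g x)
    (Y110 Y111 Y101 Y100 Y000 : Ω → ℝ)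
    (hI01 : Integrable Y101 P) (hI00 : Integrable Y100 P) (hI000 : Integrable Y000 P)
    (hconsN : ∀ᵐ ω ∂P, G ω = GLabel.N → Y1 ω = Y101 ω)
    (hconsC : ∀ᵐ ω ∂P, G ω = GLabel.C → Y1 ω = Y100 ω)
    (hcons0 : Y0 =ᵐ[P] Y000)
    (fT fN : (Fin q → ℝ) → ℝ)
    (hfT : IsCondVersion P X G e GLabel.T (fun ω => Y110 ω - Y111 ω) fT)
    (hfN : IsCondVersion P X G e GLabel.N (fun ω => Y101 ω - Y100 ω) fN)
    (hA5 : ∀ᵐ ω ∂P, fT (X ω) + fN (X ω) = 0)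
    (gN gC : (Fin q → ℝ) → ℝ)
    (hgN : IsCondVersion P X G e GLabel.N (fun ω => Y100 ω - Y000 ω) gN)
    (hgC : IsCondVersion P X G e GLabel.C (fun ω => Y100 ω - Y000 ω) gC)
    (hA6 : ∀ᵐ ω ∂P, gN (X ω) = gC (X ω))
    (ΔμN ΔμC : (Fin q → ℝ) → ℝ)
    (hΔμN : IsCondVersion P X G e GLabel.N (fun ω => Y1 ω - Y0 ω) ΔμN)
    (hΔμC : IsCondVersion P X G e GLabel.C (fun ω => Y1 ω - Y0 ω) ΔμC)
    (φ : ℝ × ℝ × GLabel × (Fin q → ℝ) → ℝ)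
    (hφ : ∀ (y0 y1 : ℝ) (g : GLabel) (x : Fin q → ℝ), φ (y0, y1, g, x) =
      (e GLabel.T x / (P {ω | G ω = GLabel.T}).toReal) *
          ((if g = GLabel.N then (1:ℝ) else 0) / e GLabel.N x) * (y1 - y0 - ΔμN x)
        + ((if g = GLabel.T then (1:ℝ) else 0) / (P {ω | G ω = GLabel.T}).toReal) * ΔμN x
        - ((e GLabel.T x / (P {ω | G ω = GLabel.T}).toReal) *
            ((if g = GLabel.C then (1:ℝ) else 0) / e GLabel.C x) * (y1 - y0 - ΔμC x)
          + ((if g = GLabel.T then (1:ℝ) else 0) / (P {ω | G ω = GLabel.T}).toReal) * ΔμC x))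
    (V : ℕ → Ω → ℝ × ℝ × GLabel × (Fin q → ℝ))
    (hVindep : iIndepFun V P)
    (hVid : ∀ i, IdentDistrib (V i) (fun ω => (Y0 ω, Y1 ω, G ω, X ω)) P P)
    :
    ∀ᵐ ω ∂P, Tendsto (fun n : ℕ => (n : ℝ)⁻¹ * ∑ i ∈ Finset.range n, φ (V i ω))
      atTop (𝓝 ((∫ ω, (Y111 ω - Y110 ω) * indG G GLabel.T ω ∂P) / (P {ω | G ω = GLabel.T}).toReal)) := by
  set pT := (P {ω | G ω = GLabel.T}).toReal
  have hφ_eq : φ = fun v => aipw e pT .N ΔμN v - aipw e pT .C ΔμC v :=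
    funext fun ⟨y0, y1, g, x⟩ => hφ y0 y1 g x
  have hΔY : Integrable (fun ω => Y1 ω - Y0 ω) P := hY1.sub hY0
  have hN_int := integrable_aipw (pT := pT) hX hG hΔY he he1 hε hpos hΔμN
  have hC_int := integrable_aipw (pT := pT) hX hG hΔY he he1 hε hpos hΔμC
  have hidentified := ae_sub_eq_neg_of_parallel_trends hG
    (fun g x => (hε.trans_le (hpos g x)).ne') hI01 hI00 hI000 hconsN hconsC hcons0
    hfN hgN hgC hΔμN hΔμC hA5 hA6
  have hmean : ∫ ω, φ (Y0 ω, Y1 ω, G ω, X ω) ∂P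
      = (∫ ω, (Y111 ω - Y110 ω) * indG G .T ω ∂P) / pT := calc
    _ = (∫ ω, (ΔμN (X ω) - ΔμC (X ω)) * indG G .T ω ∂P) / pT := by
      rw [hφ_eq, integral_sub hN_int hC_int,
        integral_aipw hX hG hΔY he he1 hε hpos (hprop .N) hΔμN,
        integral_aipw hX hG hΔY he he1 hε hpos (hprop .C) hΔμC, ← sub_div,
        ← integral_sub ((hΔμN.integrable_comp hX hε (hpos .N)).mul_indG hG .T)
          ((hΔμC.integrable_comp hX hε (hpos .C)).mul_indG hG .T)]
      simp_rw [sub_mul]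
    _ = (∫ ω, -(fT (X ω) * indG G .T ω) ∂P) / pT := by
      congr 1
      exact integral_congr_ae (by filter_upwards [hidentified] with ω hω; rw [hω, neg_mul])
    _ = _ := by
      rw [integral_neg, hfT.integral_comp_mul_indG hX hG (hprop .T)
        (hfT.integrable_comp hX hε (hpos .T)), ← integral_neg]
      simp_rw [← neg_mul, neg_sub]
  rw [← hmean]
  refine strong_law_ae_comp ?_ hVindep hVid ?_
  · rw [hφ_eq]
    exact (measurable_aipw he hΔμN.1).sub (measurable_aipw he hΔμC.1)
  · rw [hφ_eq]
    exact hN_int.sub hC_int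

theorem stmt_14
    {Ω : Type} [MeasurableSpace Ω] (P : Measure Ω) [IsProbabilityMeasure P]
    {q : ℕ} (X : Ω → (Fin q → ℝ)) (hX : Measurable X)
    (G : Ω → GLabel) (hG : Measurable G)
    (Y0 Y1 : Ω → ℝ) (hY0 : Integrable Y0 P) (hY1 : Integrable Y1 P)
    (e : GLabel → (Fin q → ℝ) → ℝ) (he : ∀ g, Measurable (e g))
    (he1 : ∀ g x, e g x ≤ 1)
    (hprop : ∀ g : GLabel,
      P[(fun ω => indG G g ω) | sigmaX X] =ᵐ[P] (fun ω => e g (X ω)))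
    (ε : ℝ) (hε : 0 < ε) (hpos : ∀ g x, ε ≤ e g x)
    (hpT : 0 < (P {ω | G ω = GLabel.T}).toReal)
    (Y110 Y111 Y101 Y100 Y000 : Ω → ℝ)
    (hI10 : Integrable Y110 P) (hI11 : Integrable Y111 P)
    (hI01 : Integrable Y101 P) (hI00 : Integrable Y100 P) (hI000 : Integrable Y000 P)
    (hconsT : ∀ᵐ ω ∂P, G ω = GLabel.T → Y1 ω = Y110 ω)
    (hconsN : ∀ᵐ ω ∂P, G ω = GLabel.N → Y1 ω = Y101 ω)
    (hconsC : ∀ᵐ ω ∂P, G ω = GLabel.C → Y1 ω = Y100 ω)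
    (hcons0 : Y0 =ᵐ[P] Y000)
    (fT fN : (Fin q → ℝ) → ℝ)
    (hfT : IsCondVersion P X G e GLabel.T (fun ω => Y110 ω - Y111 ω) fT)
    (hfN : IsCondVersion P X G e GLabel.N (fun ω => Y101 ω - Y100 ω) fN)
    (hA5 : ∀ᵐ ω ∂P, fT (X ω) + fN (X ω) = 0)
    (gN gC : (Fin q → ℝ) → ℝ)
    (hgN : IsCondVersion P X G e GLabel.N (fun ω => Y100 ω - Y000 ω) gN)
    (hgC : IsCondVersion P X G e GLabel.C (fun ω => Y100 ω - Y000 ω) gC)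
    (hA6 : ∀ᵐ ω ∂P, gN (X ω) = gC (X ω))
    (ΔμN ΔμC : (Fin q → ℝ) → ℝ)
    (hΔμN : IsCondVersion P X G e GLabel.N (fun ω => Y1 ω - Y0 ω) ΔμN)
    (hΔμC : IsCondVersion P X G e GLabel.C (fun ω => Y1 ω - Y0 ω) ΔμC)
    (MN : ℝ) (hMN : ∀ x, |ΔμN x| ≤ MN) (MC : ℝ) (hMC : ∀ x, |ΔμC x| ≤ MC)
    (φ : ℝ × ℝ × GLabel × (Fin q → ℝ) → ℝ)
    (hφ : ∀ (y0 y1 : ℝ) (g : GLabel) (x : Fin q → ℝ), φ (y0, y1, g, x) =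
      (e GLabel.T x / (P {ω | G ω = GLabel.T}).toReal) *
          ((if g = GLabel.N then (1:ℝ) else 0) / e GLabel.N x) * (y1 - y0 - ΔμN x)
        + ((if g = GLabel.T then (1:ℝ) else 0) / (P {ω | G ω = GLabel.T}).toReal) * ΔμN x
        - ((e GLabel.T x / (P {ω | G ω = GLabel.T}).toReal) *
            ((if g = GLabel.C then (1:ℝ) else 0) / e GLabel.C x) * (y1 - y0 - ΔμC x)
          + ((if g = GLabel.T then (1:ℝ) else 0) / (P {ω | G ω = GLabel.T}).toReal) * ΔμC x))
    (V : ℕ → Ω → ℝ × ℝ × GLabel × (Fin q → ℝ))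
    (hVmeas : ∀ i, Measurable (V i))
    (hVindep : iIndepFun V P)
    (hVid : ∀ i, IdentDistrib (V i) (fun ω => (Y0 ω, Y1 ω, G ω, X ω)) P P)
    :
    ∀ᵐ ω ∂P, Tendsto (fun n : ℕ => (n : ℝ)⁻¹ * ∑ i ∈ Finset.range n, φ (V i ω))
      atTop (𝓝 ((∫ ω, (Y111 ω - Y110 ω) * indG G GLabel.T ω ∂P) / (P {ω | G ω = GLabel.T}).toReal)) :=
  stmt_14_general P X hX G hG Y0 Y1 hY0 hY1 e he he1 hprop ε hε hpos Y110 Y111 Y101 Y100 Y000 hI01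
    hI00 hI000 hconsN hconsC hcons0 fT fN hfT hfN hA5 gN gC hgN hgC hA6 ΔμN ΔμC hΔμN hΔμC φ hφ V
    hVindep hVid
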